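/- Let d ≥ 1 be an integer, 0 < s < 1, m > 0, and let ψ be a Schwartz function on ℝ^d. Then for every x ∈ ℝ^d, s·(2π)^{-d} ∫_{ℝ^d}(|k|²+m²)^{s−1} ψ̂(k) e^{ik·x} dk = ∫_{ℝ^d} G(x−y) ψ(y) dy, where ψ̂(k)=∫_{ℝ^d}ψ(x)e^{-ik·x}dx and G(z) = (s/(c_s(2π)^d)) ∫₀^∞ λ^{−(2s+d)/2} e^{−πλm²} e^{−|z|²/(4πλ)} dλ with c_s = Γ(1−s)/π^{1−s}. -/

import Mathlib

/-!
Subordination: for `a > 0` and `s < 1`, `a^{s-1} = Γ(1-s)⁻¹ ∫₀^∞ t^{-s} e^{-ta} dt`. With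
`a = |k|² + m²` this writes the multiplier as a superposition of the heat semigroups
`e^{-t|k|²}`, whose inverse Fourier transforms are Gaussians in `x - y`. Both exchanges of
integrals are absolutely convergent: `ψ̂` is integrable, `ψ` is bounded and every Gaussian has
total mass `(2π)^d`, and `t^{-s} e^{-m²t}` is integrable on `(0, ∞)` because `s < 1` and `m > 0`.
The substitution `t = πλ` turns the resulting kernel into `G`.
-/

open MeasureTheory Real

noncomputable section

namespace Statement15

variable (d : ℕ)

/-- Fourier transform with the convention `ψ̂(k) = ∫ ψ(x) e^{-i k·x} dx`. -/
def ft (φ : EuclideanSpace ℝ (Fin d) → ℂ) (k : EuclideanSpace ℝ (Fin d)) : ℂ :=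
  ∫ x, φ x * Complex.exp (-(Complex.I * ((inner ℝ x k : ℝ) : ℂ)))

/-- The kernel
`G(z) = (s/(c_s(2π)^d)) ∫₀^∞ λ^{−(2s+d)/2} e^{−πλm²} e^{−|z|²/(4πλ)} dλ`,
`c_s = Γ(1−s)/π^{1−s}`. -/
def Gker (s m : ℝ) (z : EuclideanSpace ℝ (Fin d)) : ℝ :=
  (s / ((Real.Gamma (1 - s) / π ^ (1 - s)) * (2 * π) ^ d)) *
    ∫ l in Set.Ioi (0 : ℝ),
      l ^ (-(2 * s + (d : ℝ)) / 2) * Real.exp (-(π * l * m ^ 2)) *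
        Real.exp (-‖z‖ ^ 2 / (4 * π * l))

section

open Set Complex

variable {d}

local notation "E" => EuclideanSpace ℝ (Fin d)

lemma integrableOn_rpow_mul_exp_neg_mul {a b : ℝ} (ha : -1 < a) (hb : 0 < b) :
    IntegrableOn (fun t : ℝ => t ^ a * rexp (-(b * t))) (Ioi 0) :=
  (integrableOn_rpow_mul_exp_neg_mul_rpow ha one_pos hb).congr_fun
    (fun t _ => by simp only [rpow_one, neg_mul]) measurableSet_Ioi

lemma rpow_sub_one_eq_integral {s a : ℝ} (hs : s < 1) (ha : 0 < a) :
    a ^ (s - 1) = (Real.Gamma (1 - s))⁻¹ * ∫ t in Ioi (0 : ℝ), t ^ (-s) * rexp (-(a * t)) := by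
  have hΓ : Real.Gamma (1 - s) ≠ 0 := (Real.Gamma_pos_of_pos (by linarith)).ne'
  have h := Real.integral_rpow_mul_exp_neg_mul_Ioi (a := 1 - s) (by linarith) ha
  rw [show 1 - s - 1 = -s by ring] at h
  rw [h, one_div, Real.inv_rpow ha.le, ← Real.rpow_neg ha.le, neg_sub]
  field_simp

/-- `∫ e^{-t|k|²} e^{i k·z} dk`, that is, `(2π)^d` times the heat kernel at time `t`. -/
def heatKernel (t : ℝ) (z : E) : ℝ :=
  (π / t) ^ ((d : ℝ) / 2) * rexp (-(‖z‖ ^ 2 / (4 * t)))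

lemma heatKernel_nonneg {t : ℝ} (ht : 0 ≤ t) (z : E) : 0 ≤ heatKernel t z := by
  unfold heatKernel; positivity

lemma integral_cexp_neg_mul_sq_norm_add_inner {t : ℝ} (ht : 0 < t) (z : E) :
    ∫ k : E, cexp (-t * ‖k‖ ^ 2 + I * (inner ℝ z k : ℝ)) = heatKernel t z := by
  rw [GaussianFourier.integral_cexp_neg_mul_sq_norm_add (by simpa using ht),
    finrank_euclideanSpace_fin, heatKernel, ofReal_mul, ← ofReal_div,
    ofReal_cpow (by positivity), ofReal_exp, I_sq]
  push_cast
  ring_nf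

lemma integral_heatKernel {t : ℝ} (ht : 0 < t) : ∫ z : E, heatKernel t z = (2 * π) ^ d := by
  have h4t : 0 < (4 * t)⁻¹ := by positivity
  have hG := GaussianFourier.integral_rexp_neg_mul_sq_norm (V := E) h4t
  simp only [neg_mul, finrank_euclideanSpace_fin] at hG
  simp only [heatKernel, div_eq_inv_mul (‖_‖ ^ 2)]
  rw [integral_const_mul, hG, ← mul_rpow (by positivity) (by positivity),
    show π / t * (π / (4 * t)⁻¹) = (2 * π) ^ 2 by field_simp; ring,
    ← rpow_natCast, ← rpow_natCast, ← rpow_mul (by positivity)]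
  congr 1
  push_cast
  ring

lemma integrable_heatKernel {t : ℝ} (ht : 0 < t) : Integrable (heatKernel (d := d) t) :=
  .of_integral_ne_zero (by rw [integral_heatKernel ht]; positivity)

lemma ft_eq_fourier (φ : E → ℂ) (k : E) :
    ft d φ k = FourierTransform.fourier φ ((2 * π)⁻¹ • k) := by
  rw [Real.fourier_eq', ft]
  congr 1 with v
  rw [real_inner_smul_right, smul_eq_mul, mul_comm]
  congr 2
  field_simp
  push_cast
  ring

lemma integrable_ft (ψ : SchwartzMap E ℂ) : Integrable (ft d (fun y => ψ y)) := by
  have h := (integrable_comp_smul_iff volume (FourierTransform.fourier (fun y : E => ψ y))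
    (inv_ne_zero (by positivity : 2 * π ≠ 0))).2 (SchwartzMap.fourierTransformCLM ℝ ψ).integrable
  exact h.congr (.of_forall fun k => (ft_eq_fourier _ k).symm)

lemma integral_exp_mul_ft_mul_cexp_inner {t : ℝ} (ht : 0 < t) {ψ : E → ℂ} (hψ : Integrable ψ)
    (x : E) :
    ∫ k, ((rexp (-(t * ‖k‖ ^ 2)) : ℝ) : ℂ) * (ft d ψ k * cexp (I * (inner ℝ k x : ℝ)))
      = ∫ y, (heatKernel t (x - y) : ℂ) * ψ y := by
  set f : E → E → ℂ := fun k y => ψ y * cexp (-t * ‖k‖ ^ 2 + I * (inner ℝ (x - y) k : ℝ))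
  have hf : Integrable (Function.uncurry f) (volume.prod volume) := by
    refine ((GaussianFourier.integrable_cexp_neg_mul_sq_norm_add (V := E)
      (b := t) (by simpa using ht) 0 0).norm.mul_prod hψ.norm).mono'
      (hψ.aestronglyMeasurable.comp_snd.mul (Continuous.aestronglyMeasurable (by fun_prop)))
      (.of_forall fun ⟨k, y⟩ => ?_)
    simp [f, norm_exp, ← ofReal_pow, mul_comm]
  calc _ = ∫ k, ∫ y, f k y := by
        congr 1 with k
        rw [ft, ← integral_mul_const, ← integral_const_mul]
        dsimp only [f]
        congr 1 with y
        rw [mul_assoc, mul_left_comm, ofReal_exp, ← Complex.exp_add, ← Complex.exp_add,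
          inner_sub_left, real_inner_comm k x]
        push_cast
        ring_nf
    _ = ∫ y, ∫ k, f k y := integral_integral_swap hf
    _ = _ := by
        congr 1 with y
        rw [integral_const_mul, integral_cexp_neg_mul_sq_norm_add_inner ht, mul_comm]

lemma integrable_subordination {s m : ℝ} (hs : s < 1) (hm : 0 < m) {F : E → ℂ}
    (hF : Integrable F) :
    Integrable (Function.uncurry fun (k : E) (t : ℝ) =>
      ((t ^ (-s) * rexp (-((‖k‖ ^ 2 + m ^ 2) * t)) : ℝ) : ℂ) * F k)
      (volume.prod (volume.restrict (Ioi 0))) := by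
  refine (hF.norm.mul_prod (integrableOn_rpow_mul_exp_neg_mul (a := -s) (by linarith)
    (pow_pos hm 2))).mono' ((Measurable.aestronglyMeasurable (by fun_prop)).mul
      hF.aestronglyMeasurable.comp_fst) ?_
  rw [← Measure.restrict_univ (μ := volume), Measure.prod_restrict]
  filter_upwards [ae_restrict_mem (MeasurableSet.univ.prod measurableSet_Ioi)]
    with ⟨k, t⟩ hkt
  have ht : 0 < t := hkt.2
  rw [Function.uncurry_apply_pair, norm_mul, norm_real, mul_comm,
    Real.norm_of_nonneg (by positivity)]
  gcongr
  nlinarith [sq_nonneg ‖k‖]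

lemma integral_rpow_sub_one_mul {s m : ℝ} (hs : s < 1) (hm : 0 < m) {F : E → ℂ}
    (hF : Integrable F) :
    ∫ k, (((‖k‖ ^ 2 + m ^ 2) ^ (s - 1) : ℝ) : ℂ) * F k
      = ((Real.Gamma (1 - s))⁻¹ : ℝ) * ∫ t in Ioi (0 : ℝ),
          ((t ^ (-s) * rexp (-(m ^ 2 * t)) : ℝ) : ℂ) *
            ∫ k, ((rexp (-(t * ‖k‖ ^ 2)) : ℝ) : ℂ) * F k := by
  calc _ = ∫ k, ((Real.Gamma (1 - s))⁻¹ : ℝ) * ∫ t in Ioi (0 : ℝ),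
          ((t ^ (-s) * rexp (-((‖k‖ ^ 2 + m ^ 2) * t)) : ℝ) : ℂ) * F k := by
        congr 1 with k
        rw [rpow_sub_one_eq_integral hs (by positivity), ofReal_mul, integral_mul_const,
          ← integral_complex_ofReal, mul_assoc]
    _ = ((Real.Gamma (1 - s))⁻¹ : ℝ) * ∫ t in Ioi (0 : ℝ), ∫ k,
          ((t ^ (-s) * rexp (-((‖k‖ ^ 2 + m ^ 2) * t)) : ℝ) : ℂ) * F k := by
        rw [integral_const_mul, integral_integral_swap (integrable_subordination hs hm hF)]
    _ = _ := by
        congr 1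
        refine setIntegral_congr_fun measurableSet_Ioi fun t _ => ?_
        rw [← integral_const_mul]
        congr 1 with k
        rw [show -((‖k‖ ^ 2 + m ^ 2) * t) = -(m ^ 2 * t) + -(t * ‖k‖ ^ 2) by ring, Real.exp_add]
        push_cast
        ring

lemma integrable_heatKernel_convolution {s m C : ℝ} (hs : s < 1) (hm : 0 < m) {ψ : E → ℂ}
    (hψ : AEStronglyMeasurable ψ) (hC : ∀ y, ‖ψ y‖ ≤ C) (x : E) :
    Integrable (Function.uncurry fun (t : ℝ) (y : E) =>
      ((t ^ (-s) * rexp (-(m ^ 2 * t)) * heatKernel t (x - y) : ℝ) : ℂ) * ψ y)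
      ((volume.restrict (Ioi 0)).prod volume) := by
  have hmeas : AEStronglyMeasurable (Function.uncurry fun (t : ℝ) (y : E) =>
      ((t ^ (-s) * rexp (-(m ^ 2 * t)) * heatKernel t (x - y) : ℝ) : ℂ) * ψ y)
      ((volume.restrict (Ioi 0)).prod volume) :=
    (Measurable.aestronglyMeasurable (by unfold heatKernel; fun_prop)).mul hψ.comp_snd
  refine (integrable_prod_iff hmeas).2 ⟨?_, ?_⟩
  · filter_upwards [ae_restrict_mem measurableSet_Ioi] with t ht
    refine Integrable.mul_bdd ?_ hψ (.of_forall hC)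
    dsimp only
    exact (((integrable_heatKernel ht).comp_sub_left x).const_mul _).ofReal (𝕜 := ℂ)
  refine ((integrableOn_rpow_mul_exp_neg_mul (a := -s) (by linarith) (pow_pos hm 2)).mul_const
    (C * (2 * π) ^ d)).mono' hmeas.norm.integral_prod_right' ?_
  filter_upwards [ae_restrict_mem measurableSet_Ioi] with t (ht : 0 < t)
  have hw : ∀ y, 0 ≤ t ^ (-s) * rexp (-(m ^ 2 * t)) * heatKernel t (x - y) := fun y =>
    mul_nonneg (by positivity) (heatKernel_nonneg ht.le _)
  rw [Real.norm_of_nonneg (integral_nonneg fun _ => norm_nonneg _)]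
  calc _ ≤ ∫ y, t ^ (-s) * rexp (-(m ^ 2 * t)) * heatKernel t (x - y) * C := by
        refine integral_mono_of_nonneg (.of_forall fun _ => norm_nonneg _)
          ((((integrable_heatKernel ht).comp_sub_left x).const_mul _).mul_const _)
          (.of_forall fun y => ?_)
        dsimp only
        rw [Function.uncurry_apply_pair, norm_mul, norm_real, Real.norm_of_nonneg (hw y)]
        exact mul_le_mul_of_nonneg_left (hC y) (hw y)
    _ = _ := by
        rw [integral_mul_const, integral_const_mul, integral_sub_left_eq_self (heatKernel t),
          integral_heatKernel ht]
        ring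

lemma integral_mul_heatKernel_convolution {s m C : ℝ} (hs : s < 1) (hm : 0 < m) {ψ : E → ℂ}
    (hψ : AEStronglyMeasurable ψ) (hC : ∀ y, ‖ψ y‖ ≤ C) (x : E) :
    ∫ t in Ioi (0 : ℝ), ((t ^ (-s) * rexp (-(m ^ 2 * t)) : ℝ) : ℂ) *
        ∫ y, (heatKernel t (x - y) : ℂ) * ψ y
      = ∫ y, ((∫ t in Ioi (0 : ℝ), t ^ (-s) * rexp (-(m ^ 2 * t)) * heatKernel t (x - y) : ℝ)
          : ℂ) * ψ y := by
  calc _ = ∫ t in Ioi (0 : ℝ), ∫ y,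
        ((t ^ (-s) * rexp (-(m ^ 2 * t)) * heatKernel t (x - y) : ℝ) : ℂ) * ψ y := by
        congr 1 with t
        rw [← integral_const_mul]
        congr 1 with y
        push_cast
        ring
    _ = _ := by
        rw [integral_integral_swap (integrable_heatKernel_convolution hs hm hψ hC x)]
        congr 1 with y
        rw [integral_mul_const, integral_complex_ofReal]

lemma Gker_eq_integral_heatKernel (s m : ℝ) (z : E) :
    Gker d s m z = s * ((2 * π) ^ d)⁻¹ * (Real.Gamma (1 - s))⁻¹ *
      ∫ t in Ioi (0 : ℝ), t ^ (-s) * rexp (-(m ^ 2 * t)) * heatKernel t z := by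
  have hsub : ∫ t in Ioi (0 : ℝ), t ^ (-s) * rexp (-(m ^ 2 * t)) * heatKernel t z
      = π ^ (1 - s) * ∫ l in Ioi (0 : ℝ), l ^ (-(2 * s + (d : ℝ)) / 2) *
          rexp (-(π * l * m ^ 2)) * rexp (-‖z‖ ^ 2 / (4 * π * l)) := by
    have h := integral_comp_mul_left_Ioi'
      (fun t => t ^ (-s) * rexp (-(m ^ 2 * t)) * heatKernel t z) 0 pi_pos
    rw [mul_zero] at h
    rw [← h, smul_eq_mul, rpow_sub pi_pos, rpow_one, div_eq_mul_inv, mul_assoc]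
    congr 1
    rw [← integral_const_mul]
    refine setIntegral_congr_fun measurableSet_Ioi fun l (hl : 0 < l) => ?_
    rw [heatKernel, mul_rpow pi_pos.le hl.le, show π / (π * l) = l⁻¹ by field_simp,
      inv_rpow hl.le, ← rpow_neg hl.le, ← rpow_neg pi_pos.le,
      show -(2 * s + (d : ℝ)) / 2 = -s + -(d / 2) by ring, rpow_add hl,
      show -(‖z‖ ^ 2 / (4 * (π * l))) = -‖z‖ ^ 2 / (4 * π * l) by ring,
      show m ^ 2 * (π * l) = π * l * m ^ 2 by ring]
    ring
  rw [Gker, hsub, div_eq_mul_inv, mul_inv, inv_div]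
  ring

end

theorem statement15 (s m : ℝ) (hs1 : s < 1) (hm : 0 < m)
    (ψ : SchwartzMap (EuclideanSpace ℝ (Fin d)) ℂ) (x : EuclideanSpace ℝ (Fin d)) :
    ((s : ℝ) : ℂ) * ((((2 * π) ^ d)⁻¹ : ℝ) : ℂ) *
        ∫ k, (((‖k‖ ^ 2 + m ^ 2) ^ (s - 1) : ℝ) : ℂ) * ft d (fun y => ψ y) k *
          Complex.exp (Complex.I * ((inner ℝ k x : ℝ) : ℂ))
      = ∫ y, ((Gker d s m (x - y) : ℝ) : ℂ) * ψ y := by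
  have hF : Integrable fun k => ft d (fun y => ψ y) k *
      Complex.exp (Complex.I * ((inner ℝ k x : ℝ) : ℂ)) :=
    (integrable_ft ψ).mul_bdd (Continuous.aestronglyMeasurable (by fun_prop))
      (.of_forall fun k => by rw [mul_comm, Complex.norm_exp_ofReal_mul_I])
  simp_rw [mul_assoc _ (ft d _ _), integral_rpow_sub_one_mul hs1 hm hF]
  rw [setIntegral_congr_fun measurableSet_Ioi fun t (ht : 0 < t) => by
      rw [integral_exp_mul_ft_mul_cexp_inner ht ψ.integrable x],
    integral_mul_heatKernel_convolution hs1 hm ψ.continuous.aestronglyMeasurable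
      (SchwartzMap.norm_le_seminorm ℝ ψ) x, ← integral_const_mul, ← integral_const_mul]
  congr 1 with y
  rw [Gker_eq_integral_heatKernel]
  push_cast
  ring

end Statement15
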